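/- arXiv:1410.7988 — 4 statements merged into one kernel-verified Lean document; each statement's English description precedes it below -/
import Mathlib

section
/- For every n ≥ 0, the number of spanning trees of the fractal lattice G_n equals τ(G_n) = 2^{4^n − 1}. -/
open scoped Classical

noncomputable section

/-- A finite two-terminal graph: a finite simple graph together with two
distinct distinguished vertices `X` and `Y`. -/
structure TTG where
  V : Type
  [instFintypeV : Fintype V]
  G : SimpleGraph V
  X : V
  Y : V
  hXY : X ≠ Y

attribute [instance] TTG.instFintypeV

namespace TTG

/-- The embedding of the `i`-th copy of `H` (for `i : Fin 4`) into the vertex set of the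
cyclic merge of four copies of `H`, in which `Y` of copy `i` is identified with `X` of
copy `i + 1`.  The vertex `X` of copy `i` is represented by the vertex `Y` of copy `i - 1`. -/
def iota (H : TTG) (i : Fin 4) (a : H.V) : Fin 4 × {v : H.V // v ≠ H.X} :=
  if h : a = H.X then (i - 1, ⟨H.Y, Ne.symm H.hXY⟩) else (i, ⟨a, h⟩)

/-- The cyclic merge of four disjoint copies of `H`: `Y` of copy `0` is identified with `X`
of copy `1` (yielding the vertex `v`), `Y` of copy `1` with `X` of copy `2` (yielding the
new terminal `Y`), `Y` of copy `2` with `X` of copy `3` (yielding the vertex `w`), and `Y`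
of copy `3` with `X` of copy `0` (yielding the new terminal `X`).  If `withEdge = true`,
one additional new edge joining `v = (0, Y)` and `w = (2, Y)` is added. -/
def cyclicStep (withEdge : Bool) (H : TTG) : TTG where
  V := Fin 4 × {v : H.V // v ≠ H.X}
  G := SimpleGraph.fromRel (fun u w =>
        (∃ i a b, H.G.Adj a b ∧ u = H.iota i a ∧ w = H.iota i b) ∨
        (withEdge = true ∧ u = (0, ⟨H.Y, Ne.symm H.hXY⟩) ∧ w = (2, ⟨H.Y, Ne.symm H.hXY⟩)))
  X := (3, ⟨H.Y, Ne.symm H.hXY⟩)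
  Y := (1, ⟨H.Y, Ne.symm H.hXY⟩)
  hXY := by
    intro h
    have h1 : (3 : Fin 4) = 1 := congrArg Prod.fst h
    exact absurd h1 (by decide)

end TTG

/-- `K_2`, with its two vertices as the terminals `X_0` and `Y_0`. -/
def TTG.base : TTG where
  V := Fin 2
  G := ⊤
  X := 0
  Y := 1
  hXY := by decide

/-- The fractal scale-free lattice `G_n`: `G_0 = K_2`, and `G_{n+1}` is the cyclic merge of
four copies of `G_n` together with the one extra edge `e_n` joining `v` and `w`. -/
def fractal : ℕ → TTG
  | 0 => TTG.base
  | n + 1 => TTG.cyclicStep true (fractal n)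

/-- The number `τ(G)` of spanning trees of `G`: the number of edge sets `A ⊆ E(G)` for
which the spanning subgraph `(V, A)` is connected and acyclic. -/
def spanningTreeCount {V : Type} [Fintype V] (G : SimpleGraph V) : ℕ :=
  Nat.card {A : Finset (Sym2 V) // A ⊆ G.edgeFinset ∧
    (SimpleGraph.fromEdgeSet (A : Set (Sym2 V))).Connected ∧
    (SimpleGraph.fromEdgeSet (A : Set (Sym2 V))).IsAcyclic}

/-!
Call a spanning forest two-rooted (at `X`, `Y`) if each of its trees contains `X` or `Y`; it is
then a spanning tree or a forest of two trees separating `X` from `Y`. An edge set of `G_{n+1}`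
amounts to one edge set, a piece, in each of the four copies of `G_n` plus the choice whether to
take `e_n`. It is a two-rooted forest of `G_{n+1}` exactly when every piece is a two-rooted forest
of its copy and so is the *pattern*: the graph on the corners `v, Y_{n+1}, w, X_{n+1}` with an edge
across each copy whose piece joins that copy's terminals, plus `vw` if `e_n` is taken. Corners are
joined in `G_{n+1}` iff they are joined in the pattern. Eight patterns are trees and eight separate
`X_{n+1}` from `Y_{n+1}`; so if `G_n` has `k` spanning trees and `k` separating two-tree forests,
`G_{n+1}` has `8 k ^ 4` of each, and `k = 1` for `K_2`.
-/

namespace SimpleGraph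

variable {V : Type*} {G : SimpleGraph V} {x y : V}

theorem Reachable.lift {V' : Type*} {G' : SimpleGraph V'} (f : V → V')
    (hf : ∀ a b, G.Adj a b → G'.Reachable (f a) (f b)) {u v : V} (h : G.Reachable u v) :
    G'.Reachable (f u) (f v) := by
  rw [reachable_iff_reflTransGen] at h ⊢
  exact h.lift' f fun a b hab => (reachable_iff_reflTransGen _ _).mp (hf a b hab)

theorem card_edgeSet_fromEdgeSet (A : Finset (Sym2 V)) (hA : ∀ e ∈ A, ¬e.IsDiag) :
    Nat.card (fromEdgeSet (A : Set (Sym2 V))).edgeSet = A.card := by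
  have : (fromEdgeSet (A : Set (Sym2 V))).edgeSet = A := by
    rw [edgeSet_fromEdgeSet, sdiff_eq_left, Set.disjoint_left]
    exact fun e he => hA e he
  rw [this, Nat.card_coe_set_eq, Set.ncard_coe_finset]

def IsTwoRootedForest (G : SimpleGraph V) (x y : V) : Prop :=
  G.IsAcyclic ∧ ∀ v, G.Reachable v x ∨ G.Reachable v y

theorem connected_of_forall_reachable_or (h : ∀ v, G.Reachable v x ∨ G.Reachable v y)
    (hxy : G.Reachable x y) : G.Connected := by
  have hx : ∀ v, G.Reachable v x := fun v => (h v).elim id (·.trans hxy.symm)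
  have : Nonempty V := ⟨x⟩
  exact ⟨fun u v => (hx u).trans (hx v).symm⟩

theorem connected_and_isAcyclic_iff :
    G.Connected ∧ G.IsAcyclic ↔ G.IsTwoRootedForest x y ∧ G.Reachable x y :=
  ⟨fun ⟨hc, ha⟩ => ⟨⟨ha, fun v => .inl (hc v x)⟩, hc x y⟩,
    fun ⟨⟨ha, hr⟩, hxy⟩ => ⟨connected_of_forall_reachable_or hr hxy, ha⟩⟩

/-- If `x` and `y` are not joined, adding the edge `xy` makes `G` a tree exactly when `G` is
acyclic. -/
theorem isAcyclic_iff_card_edgeSet [Finite V] [Decidable (G.Reachable x y)]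
    (h : ∀ v, G.Reachable v x ∨ G.Reachable v y) :
    G.IsAcyclic ↔ Nat.card G.edgeSet + (if G.Reachable x y then 1 else 2) = Nat.card V := by
  by_cases hxy : G.Reachable x y
  · have hconn := connected_of_forall_reachable_or h hxy
    rw [if_pos hxy]
    exact ⟨fun ha => (isTree_iff_connected_and_card.mp ⟨hconn, ha⟩).2,
      fun hcard => (isTree_iff_connected_and_card.mpr ⟨hconn, hcard⟩).isAcyclic⟩
  have hne : x ≠ y := fun h => hxy (h ▸ Reachable.refl x)
  have hnadj : s(x, y) ∉ G.edgeSet := fun hadj => hxy hadj.reachable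
  have hconn : (G ⊔ edge x y).Connected := by
    refine connected_of_forall_reachable_or (x := x) (y := y) (fun v => ?_) ?_
    · exact (h v).imp (·.mono le_sup_left) (·.mono le_sup_left)
    · exact ((sup_adj ..).mpr (.inr ((edge_adj ..).mpr ⟨.inl ⟨rfl, rfl⟩, hne⟩))).reachable
  have hcard : Nat.card (G ⊔ edge x y).edgeSet = Nat.card G.edgeSet + 1 := by
    rw [edgeSet_sup, edgeSet_edge_of_ne hne, Set.union_singleton, Nat.card_coe_set_eq,
      Set.ncard_insert_of_notMem hnadj (Set.toFinite _), Nat.card_coe_set_eq]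
  rw [if_neg hxy, ← isAcyclic_add_edge_iff_of_not_reachable x y hxy, show 2 = 1 + 1 from rfl,
    ← add_assoc, ← hcard]
  exact ⟨fun ha => (isTree_iff_connected_and_card.mp ⟨hconn, ha⟩).2,
    fun hcard => (isTree_iff_connected_and_card.mpr ⟨hconn, hcard⟩).isAcyclic⟩

theorem isTwoRootedForest_iff_card [Finite V] [Decidable (G.Reachable x y)] :
    G.IsTwoRootedForest x y ↔ (∀ v, G.Reachable v x ∨ G.Reachable v y) ∧
      Nat.card G.edgeSet + (if G.Reachable x y then 1 else 2) = Nat.card V :=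
  ⟨fun h => ⟨h.2, (isAcyclic_iff_card_edgeSet h.2).mp h.1⟩,
    fun h => ⟨(isAcyclic_iff_card_edgeSet h.1).mpr h.2, h.1⟩⟩

end SimpleGraph

/-- Sorted by their pattern `{i | conn (q.1 i)}`, the configurations `q` form fibres that are
products of `Fintype.card ι` sets of size `k`. -/
theorem card_configurations {ι α β : Type*} [Fintype ι] [Finite α] [Fintype β]
    (good conn : α → Prop) [DecidablePred conn] (P : Finset ι → β → Prop) {k : ℕ}
    (hk : ∀ p : Prop, Nat.card {a // good a ∧ (conn a ↔ p)} = k) :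
    Nat.card {q : (ι → α) × β //
      (∀ i, good (q.1 i)) ∧ P (Finset.univ.filter fun i => conn (q.1 i)) q.2} =
      Nat.card {t : Finset ι × β // P t.1 t.2} * k ^ Fintype.card ι := by
  let e : {q : (ι → α) × β //
      (∀ i, good (q.1 i)) ∧ P (Finset.univ.filter fun i => conn (q.1 i)) q.2} ≃
      Σ t : {t : Finset ι × β // P t.1 t.2},
        {f : ι → α // ∀ i, good (f i) ∧ (conn (f i) ↔ i ∈ t.1.1)} :=
    { toFun q := ⟨⟨(Finset.univ.filter fun i => conn (q.1.1 i), q.1.2), q.2.2⟩,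
        ⟨q.1.1, fun i => ⟨q.2.1 i, by simp⟩⟩⟩
      invFun s := ⟨(s.2.1, s.1.1.2), fun i => (s.2.2 i).1, by
        convert s.1.2
        ext i
        simp [(s.2.2 i).2]⟩
      left_inv _ := rfl
      right_inv s :=
        Sigma.subtype_ext (Subtype.ext (Prod.ext (by ext i; simp [(s.2.2 i).2]) rfl)) rfl }
  have hfiber (t : {t : Finset ι × β // P t.1 t.2}) :
      Nat.card {f : ι → α // ∀ i, good (f i) ∧ (conn (f i) ↔ i ∈ t.1.1)} =
        k ^ Fintype.card ι := by
    rw [Nat.card_congr (Equiv.subtypePiEquivPi (β := fun _ : ι => α)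
      (p := fun i a => good a ∧ (conn a ↔ i ∈ t.1.1))), Nat.card_pi]
    simp [hk]
  rw [Nat.card_congr e, Nat.card_sigma]
  simp [hfiber, Nat.card_eq_fintype_card]

theorem sub_one_ne_self {R : Type*} [AddGroup R] [One R] [NeZero (1 : R)] (m : R) : m - 1 ≠ m :=
  fun h => one_ne_zero (sub_eq_self.mp h)

open SimpleGraph

namespace TTG

variable {H : TTG}

/-- `Y` of copy `k`, identified with `X` of copy `k + 1`: the paper's `v`, `Y_{n+1}`, `w`,
`X_{n+1}` are the corners `0, 1, 2, 3`. -/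
def corner (H : TTG) (k : Fin 4) : Fin 4 × {v : H.V // v ≠ H.X} := (k, ⟨H.Y, H.hXY.symm⟩)

/-- The new edge `e_n = {v, w}`. -/
def chord (H : TTG) : Sym2 (Fin 4 × {v : H.V // v ≠ H.X}) := s(H.corner 0, H.corner 2)

theorem corner_injective : Function.Injective H.corner := fun _ _ h => congrArg Prod.fst h

theorem iota_X (i : Fin 4) : H.iota i H.X = H.corner (i - 1) := by
  simp [iota, corner]

theorem iota_Y (i : Fin 4) : H.iota i H.Y = H.corner i := by
  simp [iota, corner, H.hXY.symm]

theorem iota_of_ne {a : H.V} (ha : a ≠ H.X) (i : Fin 4) : H.iota i a = (i, ⟨a, ha⟩) := by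
  simp [iota, ha]

theorem iota_injective (i : Fin 4) : Function.Injective (H.iota i) := by
  have hi := sub_one_ne_self i
  intro a b h
  by_cases ha : a = H.X <;> by_cases hb : b = H.X
  · rw [ha, hb]
  · rw [ha, iota_X, iota_of_ne hb] at h
    exact absurd (congrArg Prod.fst h) hi
  · rw [hb, iota_X, iota_of_ne ha] at h
    exact absurd (congrArg Prod.fst h).symm hi
  · rw [iota_of_ne ha, iota_of_ne hb] at h
    exact congrArg Subtype.val (congrArg Prod.snd h)

theorem eq_X_or_eq_Y_of_iota_eq_corner {i k : Fin 4} {a : H.V} (h : H.iota i a = H.corner k) :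
    a = H.X ∨ a = H.Y := by
  by_cases ha : a = H.X
  · exact .inl ha
  · rw [iota_of_ne ha] at h
    exact .inr (congrArg Subtype.val (congrArg Prod.snd h))

theorem eq_of_iota_eq_iota {i j : Fin 4} {a z : H.V} (hX : z ≠ H.X) (hY : z ≠ H.Y)
    (h : H.iota j a = H.iota i z) : j = i ∧ a = z := by
  rw [iota_of_ne hX] at h
  by_cases ha : a = H.X
  · rw [ha, iota_X] at h
    exact absurd (congrArg Subtype.val (congrArg Prod.snd h)).symm hY
  · rw [iota_of_ne ha] at h
    exact ⟨congrArg Prod.fst h, congrArg Subtype.val (congrArg Prod.snd h)⟩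

/-- Both ends of an edge of copy `i` lie in copy `i`, except that an end `X` is stored as the
corner `i - 1`; so these first coordinates determine `i`. -/
theorem map_fst_map_iota {e : Sym2 H.V} (he : ¬e.IsDiag) (i : Fin 4) :
    (e.map (H.iota i)).map Prod.fst = s(i, i) ∨
      (e.map (H.iota i)).map Prod.fst = s(i - 1, i) := by
  induction e using Sym2.ind with
  | _ a b =>
  have hab : a ≠ b := by simpa using he
  by_cases ha : a = H.X
  · have hb : b ≠ H.X := ha ▸ hab.symm
    simp [ha, hb, iota_X, iota_of_ne, corner]
  · by_cases hb : b = H.X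
    · simp [ha, hb, iota_X, iota_of_ne, corner, Sym2.eq_swap]
    · simp [ha, hb, iota_of_ne]

theorem map_iota_eq_map_iota_iff {i j : Fin 4} {e e' : Sym2 H.V} (he : ¬e.IsDiag)
    (he' : ¬e'.IsDiag) : e.map (H.iota i) = e'.map (H.iota j) ↔ i = j ∧ e = e' := by
  refine ⟨fun h => ?_, fun ⟨hij, hee'⟩ => hij ▸ hee' ▸ rfl⟩
  have hij : i = j := by
    have key : ∀ i j : Fin 4, ∀ x : Sym2 (Fin 4), (x = s(i, i) ∨ x = s(i - 1, i)) →
        (x = s(j, j) ∨ x = s(j - 1, j)) → i = j := by decide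
    exact key i j _ (map_fst_map_iota he i) (h ▸ map_fst_map_iota he' j)
  subst hij
  exact ⟨rfl, Sym2.map.injective (iota_injective i) h⟩

theorem map_iota_ne_chord {e : Sym2 H.V} (he : ¬e.IsDiag) (i : Fin 4) :
    e.map (H.iota i) ≠ H.chord := by
  intro h
  have key : ∀ i : Fin 4, s(0, 2) ≠ s(i, i) ∧ s(0, 2) ≠ s(i - 1, i) := by decide
  have := map_fst_map_iota he i
  rw [h] at this
  exact this.elim (key i).1 (key i).2

theorem mem_edgeSet_cyclicStep {withEdge : Bool}
    {e : Sym2 (Fin 4 × {v : H.V // v ≠ H.X})} :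
    e ∈ (H.cyclicStep withEdge).G.edgeSet ↔
      (∃ i, ∃ b ∈ H.G.edgeSet, e = b.map (H.iota i)) ∨
        (withEdge = true ∧ e = H.chord) := by
  induction e using Sym2.ind with
  | _ u w =>
  refine (mem_edgeSet _).trans ((fromRel_adj _ u w).trans ?_)
  constructor
  · rintro ⟨-, (⟨i, a, b, hab, rfl, rfl⟩ | ⟨hc, rfl, rfl⟩) |
      (⟨i, a, b, hab, rfl, rfl⟩ | ⟨hc, rfl, rfl⟩)⟩
    · exact .inl ⟨i, s(a, b), hab, rfl⟩
    · exact .inr ⟨hc, rfl⟩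
    · exact .inl ⟨i, s(a, b), hab, Sym2.eq_swap⟩
    · exact .inr ⟨hc, Sym2.eq_swap⟩
  · rintro (⟨i, b, hb, he⟩ | ⟨hc, he⟩)
    · induction b using Sym2.ind with
      | _ a b =>
      have hab : H.G.Adj a b := hb
      have hne : H.iota i a ≠ H.iota i b := (iota_injective i).ne hab.ne
      rcases Sym2.eq_iff.mp he with ⟨rfl, rfl⟩ | ⟨rfl, rfl⟩
      · exact ⟨hne, .inl (.inl ⟨i, a, b, hab, rfl, rfl⟩)⟩
      · exact ⟨hne.symm, .inr (.inl ⟨i, a, b, hab, rfl, rfl⟩)⟩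
    · have hne : H.corner 0 ≠ H.corner 2 := corner_injective.ne (by decide)
      rcases Sym2.eq_iff.mp he with ⟨rfl, rfl⟩ | ⟨rfl, rfl⟩
      · exact ⟨hne, .inl (.inr ⟨hc, rfl, rfl⟩)⟩
      · exact ⟨hne.symm, .inr (.inr ⟨hc, rfl, rfl⟩)⟩

def glue (H : TTG) (B : Fin 4 → Finset (Sym2 H.V)) (c : Bool) :
    Finset (Sym2 (Fin 4 × {v : H.V // v ≠ H.X})) :=
  (Finset.univ.biUnion fun i => (B i).image (Sym2.map (H.iota i))) ∪
    if c then {H.chord} else ∅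

def restrict (H : TTG) (A : Finset (Sym2 (Fin 4 × {v : H.V // v ≠ H.X}))) (i : Fin 4) :
    Finset (Sym2 H.V) :=
  H.G.edgeFinset.filter fun b => b.map (H.iota i) ∈ A

theorem mem_glue {B : Fin 4 → Finset (Sym2 H.V)} {c : Bool}
    {e : Sym2 (Fin 4 × {v : H.V // v ≠ H.X})} :
    e ∈ H.glue B c ↔
      (∃ i, ∃ b ∈ B i, b.map (H.iota i) = e) ∨ (c = true ∧ e = H.chord) := by
  cases c <;> simp [glue, or_comm]

variable {B : Fin 4 → Finset (Sym2 H.V)} {c : Bool}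

theorem not_isDiag_of_subset (hB : ∀ i, B i ⊆ H.G.edgeFinset) {i : Fin 4} {b : Sym2 H.V}
    (hb : b ∈ B i) : ¬b.IsDiag :=
  H.G.not_isDiag_of_mem_edgeSet (mem_edgeFinset.mp (hB i hb))

theorem glue_subset (hB : ∀ i, B i ⊆ H.G.edgeFinset) :
    H.glue B c ⊆ (H.cyclicStep true).G.edgeFinset := by
  intro e he
  refine mem_edgeFinset.mpr (mem_edgeSet_cyclicStep.mpr ?_)
  rcases mem_glue.mp he with ⟨i, b, hb, rfl⟩ | ⟨-, rfl⟩
  · exact .inl ⟨i, b, mem_edgeFinset.mp (hB i hb), rfl⟩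
  · exact .inr ⟨rfl, rfl⟩

theorem glue_restrict {A : Finset (Sym2 (Fin 4 × {v : H.V // v ≠ H.X}))}
    (hA : A ⊆ (H.cyclicStep true).G.edgeFinset) :
    H.glue (H.restrict A) (decide (H.chord ∈ A)) = A := by
  ext e
  rw [mem_glue]
  constructor
  · rintro (⟨i, b, hb, rfl⟩ | ⟨hc, rfl⟩)
    · exact (Finset.mem_filter.mp hb).2
    · exact of_decide_eq_true hc
  · intro he
    rcases mem_edgeSet_cyclicStep.mp (mem_edgeFinset.mp (hA he)) with
      ⟨i, b, hb, rfl⟩ | ⟨-, rfl⟩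
    · exact .inl ⟨i, b, Finset.mem_filter.mpr ⟨mem_edgeFinset.mpr hb, he⟩, rfl⟩
    · exact .inr ⟨decide_eq_true he, rfl⟩

theorem restrict_subset (A : Finset (Sym2 (Fin 4 × {v : H.V // v ≠ H.X}))) (i : Fin 4) :
    H.restrict A i ⊆ H.G.edgeFinset :=
  Finset.filter_subset _ _

theorem restrict_glue (hB : ∀ i, B i ⊆ H.G.edgeFinset) : H.restrict (H.glue B c) = B := by
  funext i
  ext b
  simp only [restrict, Finset.mem_filter, mem_glue]
  refine ⟨?_, fun hb => ⟨hB i hb, .inl ⟨i, b, hb, rfl⟩⟩⟩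
  rintro ⟨hb, h⟩
  have hbE := H.G.not_isDiag_of_mem_edgeSet (mem_edgeFinset.mp hb)
  rcases h with ⟨j, b', hb', h⟩ | ⟨-, h⟩
  · obtain ⟨rfl, rfl⟩ := (map_iota_eq_map_iota_iff (not_isDiag_of_subset hB hb') hbE).mp h
    exact hb'
  · exact absurd h (map_iota_ne_chord hbE i)

theorem chord_mem_glue_iff (hB : ∀ i, B i ⊆ H.G.edgeFinset) :
    H.chord ∈ H.glue B c ↔ c = true := by
  refine mem_glue.trans ⟨?_, fun hc => .inr ⟨hc, rfl⟩⟩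
  rintro (⟨i, b, hb, h⟩ | ⟨hc, -⟩)
  · exact absurd h (map_iota_ne_chord (not_isDiag_of_subset hB hb) i)
  · exact hc

def glueEquiv (P : Finset (Sym2 (Fin 4 × {v : H.V // v ≠ H.X})) → Prop) :
    {q : (Fin 4 → Finset (Sym2 H.V)) × Bool //
      (∀ i, q.1 i ⊆ H.G.edgeFinset) ∧ P (H.glue q.1 q.2)} ≃
      {A : Finset (Sym2 (Fin 4 × {v : H.V // v ≠ H.X})) //
        A ⊆ (H.cyclicStep true).G.edgeFinset ∧ P A} where
  toFun q := ⟨H.glue q.1.1 q.1.2, glue_subset q.2.1, q.2.2⟩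
  invFun A := ⟨(H.restrict A.1, decide (H.chord ∈ A.1)), restrict_subset A.1,
    (congrArg P (glue_restrict A.2.1)).mpr A.2.2⟩
  left_inv := by
    rintro ⟨⟨B, c⟩, hB, -⟩
    refine Subtype.ext (Prod.ext (restrict_glue hB) ?_)
    have := chord_mem_glue_iff (c := c) hB
    cases c <;> simpa using this
  right_inv A := Subtype.ext (glue_restrict A.2.1)

theorem card_glue (hB : ∀ i, B i ⊆ H.G.edgeFinset) :
    (H.glue B c).card = ∑ i, (B i).card + c.toNat := by
  have hchord : Disjoint (Finset.univ.biUnion fun i => (B i).image (Sym2.map (H.iota i)))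
      (if c then {H.chord} else ∅) := by
    refine Finset.disjoint_left.mpr fun e he hc => ?_
    obtain ⟨i, -, b, hb, rfl⟩ : ∃ i ∈ Finset.univ, ∃ b ∈ B i, b.map (H.iota i) = e := by
      simpa using he
    cases c
    · simp at hc
    · exact map_iota_ne_chord (not_isDiag_of_subset hB hb) i (by simpa using hc)
  rw [glue, Finset.card_union_of_disjoint hchord, Finset.card_biUnion]
  · congr 1
    · exact Finset.sum_congr rfl fun i _ =>
        Finset.card_image_of_injective _ (Sym2.map.injective (iota_injective i))
    · cases c <;> rfl
  · intro i _ j _ hij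
    refine Finset.disjoint_left.mpr fun e hi hj => hij ?_
    obtain ⟨b, hb, rfl⟩ := Finset.mem_image.mp hi
    obtain ⟨b', hb', h⟩ := Finset.mem_image.mp hj
    exact ((map_iota_eq_map_iota_iff (not_isDiag_of_subset hB hb')
      (not_isDiag_of_subset hB hb)).mp h).1.symm

abbrev glueGraph (H : TTG) (B : Fin 4 → Finset (Sym2 H.V)) (c : Bool) :
    SimpleGraph (Fin 4 × {v : H.V // v ≠ H.X}) :=
  fromEdgeSet ↑(H.glue B c)

theorem adj_glue {u w : Fin 4 × {v : H.V // v ≠ H.X}}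
    (h : (H.glueGraph B c).Adj u w) :
    (∃ i a b, (fromEdgeSet (B i : Set (Sym2 H.V))).Adj a b ∧
      u = H.iota i a ∧ w = H.iota i b) ∨
      (c = true ∧ s(u, w) = H.chord) := by
  rcases mem_glue.mp h.1 with ⟨i, b, hb, he⟩ | hc
  · induction b using Sym2.ind with
    | _ a b =>
    rcases Sym2.eq_iff.mp he with ⟨rfl, rfl⟩ | ⟨rfl, rfl⟩
    · exact .inl
        ⟨i, a, b, (fromEdgeSet_adj _).mpr ⟨hb, fun hab => h.ne (hab ▸ rfl)⟩, rfl, rfl⟩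
    · refine .inl
        ⟨i, b, a, (fromEdgeSet_adj _).mpr ⟨?_, fun hab => h.ne (hab ▸ rfl)⟩, rfl, rfl⟩
      rw [Sym2.eq_swap]
      exact hb
  · exact .inr hc

def copyHom (H : TTG) (B : Fin 4 → Finset (Sym2 H.V)) (c : Bool) (i : Fin 4) :
    fromEdgeSet (B i : Set (Sym2 H.V)) →g H.glueGraph B c where
  toFun := H.iota i
  map_rel' {a b} h :=
    ⟨mem_glue.mpr (.inl ⟨i, s(a, b), h.1, rfl⟩), (iota_injective i).ne h.2⟩

theorem reachable_glue_of_reachable {i : Fin 4} {a b : H.V}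
    (h : (fromEdgeSet (B i : Set (Sym2 H.V))).Reachable a b) :
    (H.glueGraph B c).Reachable (H.iota i a) (H.iota i b) :=
  h.map (H.copyHom B c i)

theorem isAcyclic_of_isAcyclic_glue (h : (H.glueGraph B c).IsAcyclic)
    (i : Fin 4) : (fromEdgeSet (B i : Set (Sym2 H.V))).IsAcyclic :=
  h.comap (H.copyHom B c i) (iota_injective i)

/-- If some vertex `x` of copy `i` reached neither terminal inside that copy, its component in the
merge would be the image of its component in the copy, which contains no corner. -/
theorem forall_reachable_or_of_forall_exists_reachable_corner
    (h : ∀ u, ∃ k, (H.glueGraph B c).Reachable u (H.corner k))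
    (i : Fin 4) (x : H.V) :
    (fromEdgeSet (B i : Set (Sym2 H.V))).Reachable x H.X ∨
      (fromEdgeSet (B i : Set (Sym2 H.V))).Reachable x H.Y := by
  by_contra! hx
  have hXY : ∀ z, (fromEdgeSet (B i : Set (Sym2 H.V))).Reachable x z →
      z ≠ H.X ∧ z ≠ H.Y :=
    fun z hz => ⟨fun h => hx.1 (h ▸ hz), fun h => hx.2 (h ▸ hz)⟩
  have hcomp : ∀ u, (H.glueGraph B c).Reachable (H.iota i x) u →
      ∃ z, (fromEdgeSet (B i : Set (Sym2 H.V))).Reachable x z ∧ u = H.iota i z := by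
    intro u hu
    rw [reachable_iff_reflTransGen] at hu
    induction hu with
    | refl => exact ⟨x, .refl x, rfl⟩
    | tail _ hadj ih =>
      obtain ⟨z, hz, rfl⟩ := ih
      rcases adj_glue hadj with ⟨j, a, b, hab, hza, rfl⟩ | ⟨-, he⟩
      · obtain ⟨rfl, rfl⟩ := eq_of_iota_eq_iota (hXY z hz).1 (hXY z hz).2 hza.symm
        exact ⟨b, hz.trans hab.reachable, rfl⟩
      · exfalso
        have hmem : H.iota i z ∈ H.chord := he ▸ Sym2.mem_mk_left _ _
        rcases Sym2.mem_iff.mp hmem with hk | hk <;>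
          exact (eq_X_or_eq_Y_of_iota_eq_corner hk).elim (hXY z hz).1 (hXY z hz).2
  obtain ⟨k, hk⟩ := h (H.iota i x)
  obtain ⟨z, hz, hzk⟩ := hcomp _ hk
  exact (eq_X_or_eq_Y_of_iota_eq_corner hzk.symm).elim (hXY z hz).1 (hXY z hz).2

def patternEdges (T : Finset (Fin 4)) (c : Bool) : Finset (Sym2 (Fin 4)) :=
  T.image (fun m => s(m - 1, m)) ∪ if c then {s(0, 2)} else ∅

abbrev patternGraph (T : Finset (Fin 4)) (c : Bool) : SimpleGraph (Fin 4) :=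
  fromEdgeSet ↑(patternEdges T c)

theorem card_patternEdges (T : Finset (Fin 4)) (c : Bool) :
    (patternEdges T c).card = T.card + c.toNat := by
  revert T c
  decide

theorem not_isDiag_of_mem_patternEdges {T : Finset (Fin 4)} {c : Bool} :
    ∀ e ∈ patternEdges T c, ¬e.IsDiag := by
  revert T c
  decide

theorem patternGraph_adj_of_mem {T : Finset (Fin 4)} {c : Bool} {m : Fin 4} (hm : m ∈ T) :
    (patternGraph T c).Adj (m - 1) m :=
  (fromEdgeSet_adj _).mpr
    ⟨Finset.mem_union_left _ (Finset.mem_image_of_mem _ hm), sub_one_ne_self m⟩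

theorem patternGraph_adj_chord {T : Finset (Fin 4)} {c : Bool} (hc : c = true) :
    (patternGraph T c).Adj 0 2 :=
  (fromEdgeSet_adj _).mpr ⟨Finset.mem_union_right _ (by simp [hc]), by decide⟩

def connectedCopies (H : TTG) (B : Fin 4 → Finset (Sym2 H.V)) : Finset (Fin 4) :=
  Finset.univ.filter fun i => (fromEdgeSet (B i : Set (Sym2 H.V))).Reachable H.X H.Y

/-- Retracts the merge onto the pattern: a vertex of copy `m` goes to the corner `m` (the `Y` of
its copy) if it reaches `Y` inside its copy, and to the corner `m - 1` (the `X`) otherwise. -/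
def cornerOf (H : TTG) (B : Fin 4 → Finset (Sym2 H.V)) (u : Fin 4 × {v : H.V // v ≠ H.X}) :
    Fin 4 :=
  if (fromEdgeSet (B u.1 : Set (Sym2 H.V))).Reachable u.2.1 H.Y then u.1 else u.1 - 1

theorem cornerOf_corner (k : Fin 4) : H.cornerOf B (H.corner k) = k :=
  if_pos (Reachable.refl _)

theorem reachable_cornerOf_iota (i : Fin 4) (a : H.V) :
    (patternGraph (H.connectedCopies B) c).Reachable (H.cornerOf B (H.iota i a))
      (if (fromEdgeSet (B i : Set (Sym2 H.V))).Reachable a H.Y then i else i - 1) := by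
  by_cases ha : a = H.X
  · subst ha
    rw [iota_X, cornerOf_corner]
    split_ifs with hXY
    · exact (patternGraph_adj_of_mem (by simpa [connectedCopies] using hXY)).reachable
    · exact Reachable.refl _
  · rw [iota_of_ne ha]
    exact Reachable.refl _

theorem chord_adj (hc : c = true) : (H.glueGraph B c).Adj (H.corner 0) (H.corner 2) :=
  (fromEdgeSet_adj _).mpr ⟨mem_glue.mpr (.inr ⟨hc, rfl⟩), corner_injective.ne (by decide)⟩

theorem reachable_cornerOf_of_reachable {u w : Fin 4 × {v : H.V // v ≠ H.X}}
    (h : (H.glueGraph B c).Reachable u w) :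
    (patternGraph (H.connectedCopies B) c).Reachable (H.cornerOf B u) (H.cornerOf B w) := by
  refine h.lift _ fun u w huw => ?_
  rcases adj_glue huw with ⟨i, a, b, hab, rfl, rfl⟩ | ⟨hc, he⟩
  · have hY : (fromEdgeSet (B i : Set (Sym2 H.V))).Reachable a H.Y ↔
        (fromEdgeSet (B i : Set (Sym2 H.V))).Reachable b H.Y :=
      ⟨hab.symm.reachable.trans, hab.reachable.trans⟩
    exact (reachable_cornerOf_iota i a).trans
      (if_congr hY rfl rfl ▸ (reachable_cornerOf_iota i b).symm)
  · rcases Sym2.eq_iff.mp he with ⟨rfl, rfl⟩ | ⟨rfl, rfl⟩ <;> simp only [cornerOf_corner]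
    · exact (patternGraph_adj_chord hc).reachable
    · exact (patternGraph_adj_chord hc).reachable.symm

theorem reachable_corner_iff {j k : Fin 4} :
    (H.glueGraph B c).Reachable (H.corner j) (H.corner k) ↔
      (patternGraph (H.connectedCopies B) c).Reachable j k := by
  refine ⟨fun h => by simpa only [cornerOf_corner] using reachable_cornerOf_of_reachable h,
    fun h => h.lift H.corner fun p q hpq => ?_⟩
  rcases Finset.mem_union.mp ((fromEdgeSet_adj _).mp hpq).1 with hm | hc
  · obtain ⟨m, hm, he⟩ := Finset.mem_image.mp hm
    have hr := reachable_glue_of_reachable (c := c) (Finset.mem_filter.mp hm).2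
    rw [iota_X, iota_Y] at hr
    rcases Sym2.eq_iff.mp he with ⟨rfl, rfl⟩ | ⟨rfl, rfl⟩
    exacts [hr, hr.symm]
  · have hc' : c = true ∧ s(p, q) = s(0, 2) := by cases c <;> simp_all
    rcases Sym2.eq_iff.mp hc'.2 with ⟨rfl, rfl⟩ | ⟨rfl, rfl⟩
    exacts [(chord_adj hc'.1).reachable, (chord_adj hc'.1).reachable.symm]

theorem reachable_corner_cornerOf
    (hB : ∀ i v, (fromEdgeSet (B i : Set (Sym2 H.V))).Reachable v H.X ∨
      (fromEdgeSet (B i : Set (Sym2 H.V))).Reachable v H.Y)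
    (u : Fin 4 × {v : H.V // v ≠ H.X}) :
    (H.glueGraph B c).Reachable u (H.corner (H.cornerOf B u)) := by
  obtain ⟨m, a, ha⟩ := u
  unfold cornerOf
  split_ifs with hY
  · have := reachable_glue_of_reachable (c := c) hY
    rw [iota_of_ne ha, iota_Y] at this
    exact this
  · have := reachable_glue_of_reachable (c := c) ((hB m a).resolve_right hY)
    rw [iota_of_ne ha, iota_X] at this
    exact this

theorem card_merge_add_four :
    Nat.card (Fin 4 × {v : H.V // v ≠ H.X}) + 4 = 4 * Nat.card H.V := by
  rw [Nat.card_prod, Nat.card_fin, ← Nat.card_congr (Equiv.optionSubtypeNe H.X),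
    Finite.card_option]
  ring

theorem sum_ite_add_card_connectedCopies :
    ∑ i, (if (fromEdgeSet (B i : Set (Sym2 H.V))).Reachable H.X H.Y then 1 else 2) +
      (H.connectedCopies B).card = 8 := by
  rw [connectedCopies, Finset.card_filter, ← Finset.sum_add_distrib]
  exact (Finset.sum_congr rfl fun i _ => by split_ifs <;> rfl).trans (by simp)

/-- Corners are joined in the merge iff they are in the pattern, and a piece joining its terminals
has one edge more than a piece that does not, just as the pattern has one edge more across that
copy. -/
theorem isTwoRootedForest_glue_iff_of_forall (hB : ∀ i, B i ⊆ H.G.edgeFinset)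
    (hpieces : ∀ i, (fromEdgeSet (B i : Set (Sym2 H.V))).IsTwoRootedForest H.X H.Y) :
    (H.glueGraph B c).IsTwoRootedForest (H.corner 3) (H.corner 1) ↔
      (patternGraph (H.connectedCopies B) c).IsTwoRootedForest 3 1 := by
  have hreach : (∀ u, (H.glueGraph B c).Reachable u (H.corner 3) ∨
      (H.glueGraph B c).Reachable u (H.corner 1)) ↔
      ∀ j, (patternGraph (H.connectedCopies B) c).Reachable j 3 ∨
        (patternGraph (H.connectedCopies B) c).Reachable j 1 := by
    refine ⟨fun h j => (h (H.corner j)).imp reachable_corner_iff.mp reachable_corner_iff.mp,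
      fun h u => ?_⟩
    have hu := reachable_corner_cornerOf (c := c) (fun i => (hpieces i).2) u
    exact (h (H.cornerOf B u)).imp (hu.trans <| reachable_corner_iff.mpr ·)
      (hu.trans <| reachable_corner_iff.mpr ·)
  have hcopies : ∑ i, (B i).card +
      ∑ i, (if (fromEdgeSet (B i : Set (Sym2 H.V))).Reachable H.X H.Y then 1 else 2) =
      4 * Nat.card H.V := by
    have hcopy : ∀ i, (B i).card +
        (if (fromEdgeSet (B i : Set (Sym2 H.V))).Reachable H.X H.Y then 1 else 2) =
        Nat.card H.V := fun i => by
      rw [← card_edgeSet_fromEdgeSet _ fun _ hb => not_isDiag_of_subset hB hb]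
      exact (isTwoRootedForest_iff_card.mp (hpieces i)).2
    rw [← Finset.sum_add_distrib, Finset.sum_congr rfl fun i _ => hcopy i]
    simp
  have hglue : ∀ e ∈ H.glue B c, ¬e.IsDiag := fun _ he =>
    (H.cyclicStep true).G.not_isDiag_of_mem_edgeSet (mem_edgeFinset.mp (glue_subset hB he))
  have hpattern := sum_ite_add_card_connectedCopies (B := B)
  have hvertices := card_merge_add_four (H := H)
  rw [isTwoRootedForest_iff_card, isTwoRootedForest_iff_card, hreach,
    card_edgeSet_fromEdgeSet _ hglue, card_glue hB,
    card_edgeSet_fromEdgeSet _ not_isDiag_of_mem_patternEdges, card_patternEdges, Nat.card_fin]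
  by_cases h31 : (patternGraph (H.connectedCopies B) c).Reachable 3 1
  · rw [if_pos (reachable_corner_iff.mpr h31), if_pos h31]
    constructor <;> rintro ⟨h, hcard⟩ <;> exact ⟨h, by omega⟩
  · rw [if_neg (mt reachable_corner_iff.mp h31), if_neg h31]
    constructor <;> rintro ⟨h, hcard⟩ <;> exact ⟨h, by omega⟩

theorem isTwoRootedForest_glue_iff (hB : ∀ i, B i ⊆ H.G.edgeFinset) :
    (H.glueGraph B c).IsTwoRootedForest (H.corner 3) (H.corner 1) ↔
      (∀ i, (fromEdgeSet (B i : Set (Sym2 H.V))).IsTwoRootedForest H.X H.Y) ∧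
        (patternGraph (H.connectedCopies B) c).IsTwoRootedForest 3 1 := by
  refine ⟨fun h => ?_, fun ⟨hpieces, hpat⟩ =>
    (isTwoRootedForest_glue_iff_of_forall hB hpieces).mpr hpat⟩
  have hpieces : ∀ i, (fromEdgeSet (B i : Set (Sym2 H.V))).IsTwoRootedForest H.X H.Y := fun i =>
    ⟨isAcyclic_of_isAcyclic_glue h.1 i, forall_reachable_or_of_forall_exists_reachable_corner
      (fun u => (h.2 u).elim (⟨3, ·⟩) (⟨1, ·⟩)) i⟩
  exact ⟨hpieces, (isTwoRootedForest_glue_iff_of_forall hB hpieces).mp h⟩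

/-- `H.forestCount True` is the number `τ(H)` of spanning trees, `H.forestCount False` the number
of spanning forests with two trees, one containing `X` and the other `Y`. -/
def forestCount (H : TTG) (p : Prop) : ℕ :=
  Nat.card {A : Finset (Sym2 H.V) // A ⊆ H.G.edgeFinset ∧
    (fromEdgeSet (A : Set (Sym2 H.V))).IsTwoRootedForest H.X H.Y ∧
    ((fromEdgeSet (A : Set (Sym2 H.V))).Reachable H.X H.Y ↔ p)}

theorem spanningTreeCount_eq_forestCount (H : TTG) :
    spanningTreeCount H.G = H.forestCount True :=
  Nat.card_congr <| Equiv.subtypeEquivRight fun A => by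
    rw [connected_and_isAcyclic_iff (x := H.X) (y := H.Y), iff_true]

theorem card_patterns (p : Prop) :
    Nat.card {t : Finset (Fin 4) × Bool // (patternGraph t.1 t.2).IsTwoRootedForest 3 1 ∧
      ((patternGraph t.1 t.2).Reachable 3 1 ↔ p)} = 8 := by
  simp_rw [isTwoRootedForest_iff_card, card_edgeSet_fromEdgeSet _ not_isDiag_of_mem_patternEdges,
    Nat.card_eq_fintype_card, Fintype.card_fin]
  rw [Fintype.card_subtype]
  by_cases hp : p <;> simp only [hp, iff_true, iff_false] <;> decide

theorem forestCount_cyclicStep {k : ℕ} (hk : ∀ p, H.forestCount p = k) (p : Prop) :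
    (H.cyclicStep true).forestCount p = 8 * k ^ 4 := by
  have hcopies := card_configurations (ι := Fin 4) (β := Bool) (k := k)
    (fun D => D ⊆ H.G.edgeFinset ∧ (fromEdgeSet (D : Set (Sym2 H.V))).IsTwoRootedForest H.X H.Y)
    (fun D => (fromEdgeSet (D : Set (Sym2 H.V))).Reachable H.X H.Y)
    (fun T c => (patternGraph T c).IsTwoRootedForest 3 1 ∧
      ((patternGraph T c).Reachable 3 1 ↔ p))
    (fun q => by rw [← hk q, forestCount]; simp only [and_assoc])
  rw [card_patterns, Fintype.card_fin] at hcopies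
  rw [← hcopies]
  refine (Nat.card_congr (glueEquiv (H := H) fun A =>
    (fromEdgeSet ↑A).IsTwoRootedForest (H.corner 3) (H.corner 1) ∧
      ((fromEdgeSet ↑A).Reachable (H.corner 3) (H.corner 1) ↔ p))).symm.trans
    (Nat.card_congr (Equiv.subtypeEquivRight fun q => ⟨?_, ?_⟩))
  · rintro ⟨hB, h, hp⟩
    obtain ⟨hpieces, hpat⟩ := (isTwoRootedForest_glue_iff hB).mp h
    exact ⟨fun i => ⟨hB i, hpieces i⟩, hpat, reachable_corner_iff.symm.trans hp⟩
  · rintro ⟨hB, hpat, hp⟩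
    have hB' := fun i => (hB i).1
    exact ⟨hB', (isTwoRootedForest_glue_iff hB').mpr ⟨fun i => (hB i).2, hpat⟩,
      reachable_corner_iff.trans hp⟩

theorem forestCount_base (p : Prop) : TTG.base.forestCount p = 1 := by
  have hforest (A : Finset (Sym2 (Fin 2))) :
      (fromEdgeSet (A : Set (Sym2 (Fin 2)))).IsTwoRootedForest 0 1 :=
    ⟨IsAcyclic.of_card_le_two (by simp), fun v => by fin_cases v <;> simp⟩
  have hedges : TTG.base.G.edgeFinset = ({s(0, 1)} : Finset (Sym2 (Fin 2))) := by
    ext e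
    induction e using Sym2.ind with
    | _ a b =>
      rw [mem_edgeFinset, mem_edgeSet]
      revert a b
      show ∀ a b : Fin 2, a ≠ b ↔ s(a, b) ∈ ({s(0, 1)} : Finset (Sym2 (Fin 2)))
      decide
  have hcount : Nat.card {A : Finset (Sym2 (Fin 2)) // A ⊆ {s(0, 1)} ∧
      ((fromEdgeSet (A : Set (Sym2 (Fin 2)))).Reachable 0 1 ↔ p)} = 1 := by
    rw [Nat.card_eq_fintype_card, Fintype.card_subtype]
    by_cases hp : p <;> simp only [hp, iff_true, iff_false] <;> decide
  rw [← hcount]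
  refine Nat.card_congr (Equiv.subtypeEquivRight fun A => ?_)
  rw [hedges]
  exact ⟨fun ⟨hA, _, hp⟩ => ⟨hA, hp⟩, fun ⟨hA, hp⟩ => ⟨hA, hforest A, hp⟩⟩

theorem forestCount_fractal (n : ℕ) (p : Prop) :
    (fractal n).forestCount p = 2 ^ (4 ^ n - 1) := by
  induction n generalizing p with
  | zero => exact forestCount_base p
  | succ n ih =>
    rw [fractal, forestCount_cyclicStep ih, ← pow_mul, show (8 : ℕ) = 2 ^ 3 from rfl,
      ← pow_add]
    have : 1 ≤ 4 ^ n := Nat.one_le_pow _ _ (by norm_num)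
    congr 1
    rw [pow_succ]
    omega

end TTG

/-- The number of spanning trees of the fractal lattice `G_n` is `2 ^ (4 ^ n - 1)`. -/
theorem fractal_spanningTreeCount (n : ℕ) :
    spanningTreeCount (fractal n).G = 2 ^ (4 ^ n - 1) := by
  rw [TTG.spanningTreeCount_eq_forestCount, TTG.forestCount_fractal]

end
end

section
/- Let a, b : ℕ → ℚ satisfy a(0) = b(0) = 1, a(n+1) = 4·a(n)^2·b(n)^2 and b(n+1) = 2·a(n)^2·b(n)^2 + 4·a(n)·b(n)^3 for all n ≥ 0. Then for every n ≥ 0, a(n) = Π_{i=0}^{n} (i+1)^{2·4^{n−i}} and 2·b(n) = (n+2)·a(n). -/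
open scoped Classical

noncomputable section

/-- The recursions obtained by evaluating the Tutte recursions of the fractal lattice at
`(x, y) = (1, 0)`: `a n = ∏_{i=0}^{n} (i + 1) ^ (2 * 4 ^ (n - i))` and
`2 * b n = (n + 2) * a n`. -/
theorem eval_one_zero_recursion (a b : ℕ → ℚ)
    (ha0 : a 0 = 1) (hb0 : b 0 = 1)
    (ha : ∀ n : ℕ, a (n + 1) = 4 * a n ^ 2 * b n ^ 2)
    (hb : ∀ n : ℕ, b (n + 1) = 2 * a n ^ 2 * b n ^ 2 + 4 * a n * b n ^ 3)
    (n : ℕ) :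
    a n = ∏ i ∈ Finset.range (n + 1), ((i : ℚ) + 1) ^ (2 * 4 ^ (n - i)) ∧
    2 * b n = (n + 2) * a n := by
  induction n with
  | zero =>
    constructor
    · simp [ha0]
    · rw [hb0, ha0]; norm_num
  | succ n ih =>
    obtain ⟨h1, h2⟩ := ih
    constructor
    · rw [ha, Finset.prod_range_succ]
      have hstep : ∀ i ∈ Finset.range (n + 1),
          ((i : ℚ) + 1) ^ (2 * 4 ^ (n + 1 - i)) = (((i : ℚ) + 1) ^ (2 * 4 ^ (n - i))) ^ 4 := by
        intro i hi
        rw [Finset.mem_range] at hi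
        have : n + 1 - i = (n - i) + 1 := by omega
        rw [this, pow_succ, ← mul_assoc, pow_mul]
      rw [Finset.prod_congr rfl hstep, Finset.prod_pow, ← h1]
      have hexp : n + 1 - (n + 1) = 0 := by omega
      rw [hexp]
      push_cast
      ring_nf
      linear_combination (a n ^ 2 * (2 * b n + ((n : ℚ) + 2) * a n)) * h2
    · rw [hb, ha]
      push_cast
      linear_combination (4 * a n * b n ^ 2) * h2

end
end

section
/- Let c, d : ℕ → ℚ satisfy c(0) = d(0) = 1, c(n+1) = 4·c(n)^3·d(n) + 2·c(n)^2·d(n)^2 and d(n+1) = 4·c(n)^2·d(n)^2 for all n ≥ 0. Then for every n ≥ 0, d(n) = Π_{i=0}^{n} (i+1)^{2·4^{n−i}}, 2·c(n) = (n+2)·d(n), and 2·(c(n) − d(n)) = n·d(n). -/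
open scoped Classical

noncomputable section

lemma prod_step (n : ℕ) :
    (∏ i ∈ Finset.range (n + 2), ((i : ℚ) + 1) ^ (2 * 4 ^ (n + 1 - i))) =
      ((n : ℚ) + 2) ^ 2 *
        (∏ i ∈ Finset.range (n + 1), ((i : ℚ) + 1) ^ (2 * 4 ^ (n - i))) ^ 4 := by
  rw [Finset.prod_range_succ]
  have h1 : n + 1 - (n + 1) = 0 := by omega
  have h2 : (∏ i ∈ Finset.range (n + 1), ((i : ℚ) + 1) ^ (2 * 4 ^ (n + 1 - i))) =
      ∏ i ∈ Finset.range (n + 1), (((i : ℚ) + 1) ^ (2 * 4 ^ (n - i))) ^ 4 := by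
    refine Finset.prod_congr rfl fun i hi => ?_
    have hi' : i ≤ n := by
      have := Finset.mem_range.mp hi; omega
    have : n + 1 - i = (n - i) + 1 := by omega
    rw [this, ← pow_mul]
    ring_nf
  rw [h2, ← Finset.prod_pow, h1]
  push_cast
  ring

/-- The recursions obtained by evaluating the Tutte recursions of the fractal lattice at
`(x, y) = (0, 1)`: `d n = ∏_{i=0}^{n} (i + 1) ^ (2 * 4 ^ (n - i))`,
`2 * c n = (n + 2) * d n` and `2 * (c n - d n) = n * d n`. -/
theorem eval_zero_one_recursion (c d : ℕ → ℚ)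
    (hc0 : c 0 = 1) (hd0 : d 0 = 1)
    (hc : ∀ n : ℕ, c (n + 1) = 4 * c n ^ 3 * d n + 2 * c n ^ 2 * d n ^ 2)
    (hd : ∀ n : ℕ, d (n + 1) = 4 * c n ^ 2 * d n ^ 2)
    (n : ℕ) :
    d n = ∏ i ∈ Finset.range (n + 1), ((i : ℚ) + 1) ^ (2 * 4 ^ (n - i)) ∧
    2 * c n = (n + 2) * d n ∧
    2 * (c n - d n) = n * d n := by
  suffices h : d n = ∏ i ∈ Finset.range (n + 1), ((i : ℚ) + 1) ^ (2 * 4 ^ (n - i)) ∧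
      2 * c n = (n + 2) * d n by
    refine ⟨h.1, h.2, ?_⟩
    have := h.2
    push_cast at this ⊢
    linarith
  induction n with
  | zero =>
    constructor
    · simp [hd0]
    · simp [hc0, hd0]
  | succ n ih =>
    obtain ⟨ihd, ihc⟩ := ih
    have hc2 : 4 * c n ^ 2 = ((n : ℚ) + 2) ^ 2 * d n ^ 2 := by
      have : (2 * c n) ^ 2 = (((n : ℚ) + 2) * d n) ^ 2 := by rw [ihc]
      nlinarith [this]
    constructor
    · rw [hd n, prod_step n, ← ihd]
      nlinarith [hc2]
    · have hd1 : d (n + 1) = ((n : ℚ) + 2) ^ 2 * d n ^ 4 := by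
        rw [hd n]; nlinarith [hc2]
      rw [hc n, hd1]
      have h2c : c n = (((n : ℚ) + 2) * d n) / 2 := by linarith [ihc]
      rw [h2c]
      push_cast
      ring

end
end

section
/- Let a, b : ℕ → ℚ satisfy a(0) = b(0) = 1, a(n+1) = 4·a(n)^3·b(n) and b(n+1) = 3·a(n)^2·b(n)^2 for all n ≥ 0. Then for every n ≥ 0, a(n) = (4/3)^n · b(n) and a(n) = 3^{(4^n − 3n − 1)/9} · 4^{(2·4^n + 3n − 2)/9}. -/
open scoped Classical

noncomputable section

private def fE : ℕ → ℕ
  | 0 => 0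
  | n + 1 => 4 * fE n + n

private def fG : ℕ → ℕ
  | 0 => 0
  | n + 1 => 4 * fG n + 2 * n

private def fF (n : ℕ) : ℕ := fG n + n

private lemma fE_closed (n : ℕ) : 9 * fE n + 3 * n + 1 = 4 ^ n := by
  induction n with
  | zero => simp [fE]
  | succ n ih => simp [fE, pow_succ]; omega

private lemma fF_closed (n : ℕ) : 9 * fF n + 2 = 2 * 4 ^ n + 3 * n := by
  induction n with
  | zero => simp [fF, fG]
  | succ n ih => simp [fF, fG, pow_succ] at *; omega

private lemma fF_succ (n : ℕ) : fF (n + 1) + n = 4 * fF n + 1 := by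
  simp [fF, fG]; ring

/-- The recursions obtained by evaluating the Tutte recursions of the `(1,3)`-flower at
`(x, y) = (1, 1)`: `a n = (4 / 3) ^ n * b n` and
`a n = 3 ^ ((4 ^ n - 3 n - 1) / 9) * 4 ^ ((2 * 4 ^ n + 3 n - 2) / 9)`. -/
theorem flower13_tree_recursion (a b : ℕ → ℚ)
    (ha0 : a 0 = 1) (hb0 : b 0 = 1)
    (ha : ∀ n : ℕ, a (n + 1) = 4 * a n ^ 3 * b n)
    (hb : ∀ n : ℕ, b (n + 1) = 3 * a n ^ 2 * b n ^ 2)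
    (n : ℕ) :
    a n = (4 / 3 : ℚ) ^ n * b n ∧
    a n = 3 ^ ((4 ^ n - 3 * n - 1) / 9) * 4 ^ ((2 * 4 ^ n + 3 * n - 2) / 9) := by
  have h4 : ∀ m : ℕ, ((4 : ℚ) ^ m) ≠ 0 := fun m => pow_ne_zero m (by norm_num)
  have key : ∀ m : ℕ, a m = 3 ^ (fE m) * 4 ^ (fF m) ∧
      b m * 4 ^ m = 3 ^ (fE m + m) * 4 ^ (fF m) := by
    intro m
    induction m with
    | zero => simp [ha0, hb0, fE, fF, fG]
    | succ m ih =>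
      obtain ⟨h1, h2⟩ := ih
      have hE' : fE (m + 1) = 4 * fE m + m := rfl
      have hF' : fF (m + 1) + m = 4 * fF m + 1 := fF_succ m
      constructor
      · have : a (m + 1) * 4 ^ m = 3 ^ (fE (m + 1)) * 4 ^ (fF (m + 1)) * 4 ^ m := by
          rw [ha m, mul_assoc, h2, h1, mul_assoc ((3:ℚ) ^ fE (m+1)), ← pow_add, hF', hE']
          ring
        exact mul_right_cancel₀ (h4 m) this
      · have : b (m + 1) * 4 ^ (m + 1) * 4 ^ (m + 1) =
            3 ^ (fE (m + 1) + (m + 1)) * 4 ^ (fF (m + 1)) * 4 ^ (m + 1) := by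
          have e1 : (4:ℚ) ^ (fF (m+1)) * 4 ^ (m+1) = 4 ^ (4 * fF m + 2) := by
            rw [← pow_add]; congr 1; omega
          have e2 : b (m + 1) * 4 ^ (m + 1) * 4 ^ (m + 1) =
              3 * a m ^ 2 * (b m * 4 ^ m) ^ 2 * 16 := by
            rw [hb m]; ring
          rw [e2, h1, h2, mul_assoc _ _ ((4:ℚ)^(m+1)), e1, hE']
          have : (16 : ℚ) = 4 ^ 2 := by norm_num
          rw [this]
          ring
        exact mul_right_cancel₀ (h4 (m + 1)) this
  obtain ⟨h1, h2⟩ := key n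
  have hE := fE_closed n
  have hF := fF_closed n
  have hEe : (4 ^ n - 3 * n - 1) / 9 = fE n := by omega
  have hFe : (2 * 4 ^ n + 3 * n - 2) / 9 = fF n := by omega
  refine ⟨?_, by rw [hEe, hFe]; exact h1⟩
  have h3 : ((3 : ℚ) ^ n) ≠ 0 := pow_ne_zero n (by norm_num)
  rw [div_pow]
  rw [div_mul_eq_mul_div, eq_div_iff h3]
  calc a n * 3 ^ n = (3 ^ (fE n + n) * 4 ^ (fF n)) * 4 ^ n / 4 ^ n := by
        rw [mul_div_assoc, div_self (h4 n), mul_one, h1]; ring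
    _ = 4 ^ n * b n := by rw [← h2]; field_simp

end
end
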